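/- Perfect recall holds in the semantics with observables: let ⟨F, T⟩ be an epistemic causal model with observables and A ∈ T. If K[X⃗:=x⃗]ψ holds at (⟨F, T⟩, A) under ⊨^O, then [X⃗:=x⃗]Kψ holds at (⟨F, T⟩, A) under ⊨^O. -/
import Mathlib


open Classical

/-- A finite signature: variables sorted into exogenous and endogenous, each with a
finite nonempty range of values. -/
structure Sig : Type 1 where
  Var : Type
  exo : Var → Prop
  Val : Var → Type
  [decEqVar : DecidableEq Var]
  [finVar : Fintype Var]
  [neVar : Nonempty Var]
  [decEqVal : ∀ X : Var, DecidableEq (Val X)]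
  [finVal : ∀ X : Var, Fintype (Val X)]
  [neVal : ∀ X : Var, Nonempty (Val X)]

attribute [instance] Sig.decEqVar Sig.finVar Sig.neVar Sig.decEqVal Sig.finVal Sig.neVal

variable {S : Sig}

/-- A valuation: a value for each variable. -/
abbrev Env (S : Sig) : Type := ∀ X : S.Var, S.Val X

instance : Nonempty (Env S) := ⟨fun X => Classical.arbitrary (S.Val X)⟩

/-- Values for all variables other than `V`. -/
abbrev Others (S : Sig) (V : S.Var) : Type := ∀ X : {X : S.Var // X ≠ V}, S.Val X.val

/-- The restriction of a valuation to the variables other than `V`. -/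
def Env.restrict (A : Env S) (V : S.Var) : Others S V := fun X => A X.val

/-- A family of structural functions (only the components at endogenous variables
are meaningful). -/
abbrev StructFuns (S : Sig) : Type := ∀ V : S.Var, Others S V → S.Val V

/-- A valuation complies with the structural functions: the value of each endogenous
variable is obtained by applying its structural function to the values of all
other variables. -/
def Complies (F : StructFuns S) (A : Env S) : Prop :=
  ∀ V : S.Var, ¬ S.exo V → A V = F V (A.restrict V)

/-- The endogenous variable `V` is directly causally affected by `X` under `F`. -/
def DirAff (F : StructFuns S) (X V : S.Var) : Prop :=
  ¬ S.exo V ∧ ∃ (h : X ≠ V) (g : Others S V) (x₁ x₂ : S.Val X),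
    x₁ ≠ x₂ ∧
      F V (Function.update g ⟨X, h⟩ x₁) ≠ F V (Function.update g ⟨X, h⟩ x₂)

/-- `F` is recursive: the transitive closure of the direct causal dependence
relation is asymmetric (transitivity is automatic for `Relation.TransGen`). -/
def RecursiveF (F : StructFuns S) : Prop :=
  ∀ a b : S.Var, Relation.TransGen (DirAff F) a b → ¬ Relation.TransGen (DirAff F) b a

/-- An assignment of values to a set of pairwise distinct variables. -/
abbrev Intervention (S : Sig) : Type := ∀ X : S.Var, Option (S.Val X)

/-- The empty assignment. -/
def iEmpty (S : Sig) : Intervention S := fun _ => none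

/-- Extend an assignment by additionally setting `Y` to `y` (overriding). -/
def iUpd (I : Intervention S) (Y : S.Var) (y : S.Val Y) : Intervention S :=
  Function.update I Y (some y)

/-- Combine assignments, the second overriding the first:  `[X⃗ := x⃗, Y⃗ := y⃗]`. -/
def icomp (I J : Intervention S) : Intervention S := fun W =>
  match J W with
  | some v => some v
  | none => I W

/-- The intervened family of structural functions: intervened variables get the
constant function returning the assigned value; the rest are unchanged. -/
def intF (F : StructFuns S) (I : Intervention S) : StructFuns S :=
  fun V g => (I V).getD (F V g)

/-- `A'` is the result of intervening with `I` on the valuation `A` (w.r.t. `F`):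
exogenous intervened variables get the assigned value, exogenous non-intervened
variables keep their value, and each endogenous variable complies with its new
structural function. -/
def IntervenedVal (F : StructFuns S) (A : Env S) (I : Intervention S) (A' : Env S) : Prop :=
  (∀ X : S.Var, S.exo X → ∀ v : S.Val X, I X = some v → A' X = v) ∧
  (∀ X : S.Var, S.exo X → I X = none → A' X = A X) ∧
  (∀ V : S.Var, ¬ S.exo V → A' V = intF F I V (A'.restrict V))

/-- The intervened valuation (unique when `F` is recursive). -/
noncomputable def intVal (F : StructFuns S) (A : Env S) (I : Intervention S) : Env S :=
  Classical.epsilon (IntervenedVal F A I)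

/-- The language L_KC: atoms `Y = y`, negation, conjunction, knowledge, and
interventionist counterfactual operators. -/
inductive Form (S : Sig) : Type where
  | eq (Y : S.Var) (y : S.Val Y) : Form S
  | neg (φ : Form S) : Form S
  | conj (φ ψ : Form S) : Form S
  | know (φ : Form S) : Form S
  | int (I : Intervention S) (φ : Form S) : Form S

namespace Form

/-- Material implication, defined from `¬` and `∧` as usual. -/
def impl (φ ψ : Form S) : Form S := Form.neg (Form.conj φ (Form.neg ψ))

/-- Disjunction, defined from `¬` and `∧` as usual. -/
def orF (φ ψ : Form S) : Form S := Form.neg (Form.conj (Form.neg φ) (Form.neg ψ))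

/-- Biconditional. -/
def iffF (φ ψ : Form S) : Form S := Form.conj (impl φ ψ) (impl ψ φ)

end Form

/-- A canonical contradiction. -/
noncomputable def botF (S : Sig) : Form S :=
  let X : S.Var := Classical.arbitrary S.Var
  let x : S.Val X := Classical.arbitrary (S.Val X)
  Form.conj (Form.eq X x) (Form.neg (Form.eq X x))

/-- A canonical tautology. -/
noncomputable def topF (S : Sig) : Form S := Form.neg (botF S)

/-- Disjunction of a list of formulas (the empty disjunction is a contradiction). -/
noncomputable def bigOr : List (Form S) → Form S
  | [] => botF S
  | φ :: l => l.foldl Form.orF φ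

/-- Conjunction of a list of formulas (the empty conjunction is a tautology). -/
noncomputable def bigConj : List (Form S) → Form S
  | [] => topF S
  | φ :: l => l.foldl Form.conj φ

/-- `φ` is an instance of a propositional tautology: it evaluates to `true` under
every Boolean valuation that respects negation and conjunction (treating all
other formulas as atoms). -/
def Tauto (φ : Form S) : Prop :=
  ∀ v : Form S → Bool,
    (∀ ψ : Form S, v (Form.neg ψ) = !(v ψ)) →
    (∀ ψ χ : Form S, v (Form.conj ψ χ) = (v ψ && v χ)) →
    v φ = true

/-- The assignment `[Z⃗ := z⃗, X := x]` where `Z⃗` lists all variables other than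
`X` and `V`, used in the formula `X ⇝ V`. -/
def ltInt (X V : S.Var) (g : ∀ W : {W : S.Var // W ≠ X ∧ W ≠ V}, S.Val W.val)
    (x : S.Val X) : Intervention S := fun W =>
  if h : W = X then some (h.symm ▸ x)
  else if h' : W = V then none
  else some (g ⟨W, ⟨h, h'⟩⟩)

/-- The formula `X ⇝ V`: the disjunction, over tuples `z⃗` of values for all
variables other than `X` and `V`, distinct values `x₁ ≠ x₂` of `X` and distinct
values `v₁ ≠ v₂` of `V`, of `[Z⃗:=z⃗, X:=x₁]V=v₁ ∧ [Z⃗:=z⃗, X:=x₂]V=v₂`. -/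
noncomputable def leadsTo (X V : S.Var) : Form S :=
  bigOr ((Finset.univ.filter
      (fun p : (∀ W : {W : S.Var // W ≠ X ∧ W ≠ V}, S.Val W.val) ×
          (S.Val X × S.Val X) × (S.Val V × S.Val V) =>
        p.2.1.1 ≠ p.2.1.2 ∧ p.2.2.1 ≠ p.2.2.2)).toList.map
    (fun p =>
      Form.conj
        (Form.int (ltInt X V p.1 p.2.1.1) (Form.eq V p.2.2.1))
        (Form.int (ltInt X V p.1 p.2.1.2) (Form.eq V p.2.2.2))))

/-- The chain `X₀ ⇝ X₁ ∧ ⋯ ∧ X_k ⇝ X_{k+1}`. -/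
noncomputable def chainConj (X : ℕ → S.Var) : ℕ → Form S
  | 0 => leadsTo (X 0) (X 1)
  | n + 1 => Form.conj (chainConj X n) (leadsTo (X (n + 1)) (X (n + 2)))

/-- `ψ₁ → (ψ₂ → ⋯ → (ψₙ → φ))` for a list of premises. -/
def impsFrom : List (Form S) → Form S → Form S
  | [], φ => φ
  | ψ :: l, φ => Form.impl ψ (impsFrom l φ)

/-- Satisfaction at a pointed epistemic causal model with observables `Obs`
(the semantics `⊨ᴼ`): after an intervention, the epistemic state retains only
those intervened valuations that agree with the intervened actual valuation on
all observables. -/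
def SatO (Obs : Finset S.Var) : Form S → StructFuns S → Set (Env S) → Env S → Prop
  | Form.eq Y y, _, _, A => A Y = y
  | Form.neg φ, F, T, A => ¬ SatO Obs φ F T A
  | Form.conj φ ψ, F, T, A => SatO Obs φ F T A ∧ SatO Obs ψ F T A
  | Form.know φ, F, T, _ => ∀ B ∈ T, SatO Obs φ F T B
  | Form.int I φ, F, T, A =>
      SatO Obs φ (intF F I)
        {B' | ∃ B ∈ T, B' = intVal F B I ∧ ∀ W ∈ Obs, B' W = intVal F A I W}
        (intVal F A I)

/-- Theorem (perfect recall with observables): if `K[X⃗:=x⃗]ψ` holds at a pointed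
epistemic causal model with observables under `⊨ᴼ`, then so does `[X⃗:=x⃗]Kψ`. -/
theorem perfect_recall_with_observables (S : Sig) (Obs : Finset S.Var)
    (F : StructFuns S) (T : Set (Env S)) (A : Env S)
    (hRec : RecursiveF F) (hne : T.Nonempty) (hComp : ∀ B ∈ T, Complies F B)
    (hObs : ∀ B ∈ T, ∀ C ∈ T, ∀ W ∈ Obs, B W = C W) (hA : A ∈ T)
    (I : Intervention S) (ψ : Form S) :
    SatO Obs (Form.know (Form.int I ψ)) F T A →
    SatO Obs (Form.int I (Form.know ψ)) F T A := by
  intro h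
  simp only [SatO] at h ⊢
  intro B' hB'
  obtain ⟨B, hB, rfl, hagree⟩ := hB'
  have hsets : {C' | ∃ C ∈ T, C' = intVal F C I ∧ ∀ W ∈ Obs, C' W = intVal F A I W}
      = {C' | ∃ C ∈ T, C' = intVal F C I ∧ ∀ W ∈ Obs, C' W = intVal F B I W} := by
    ext C'
    simp only [Set.mem_setOf_eq]
    constructor
    · rintro ⟨C, hC, rfl, hag⟩
      exact ⟨C, hC, rfl, fun W hW => (hag W hW).trans (hagree W hW).symm⟩
    · rintro ⟨C, hC, rfl, hag⟩
      exact ⟨C, hC, rfl, fun W hW => (hag W hW).trans (hagree W hW)⟩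
  rw [hsets]
  exact h B hB
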